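/- The generalized continued fraction π = 3 + 1²/(6 + 3²/(6 + 5²/(6 + ···))) holds: the convergents of the continued fraction with leading term b₀ = 3, all partial denominators b_k = 6 for k ≥ 1, and partial numerators a_k = (2k−1)² for k ≥ 1, converge to π. -/
import Mathlib


open Real Filter
open scoped Nat

/-- Numerators `A_k` (shifted: `cfPi3Num (k+1) = A_k`, `cfPi3Num 0 = A_{-1} = 1`)
for the continued fraction with leading term `b₀ = 3`, partial denominators
`b_k = 6` and partial numerators `a_k = (2k-1)²` for `k ≥ 1`. -/
noncomputable def cfPi3Num : ℕ → ℝ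
  | 0 => 1
  | 1 => 3
  | (k + 2) => 6 * cfPi3Num (k + 1) + (2 * (k + 1) - 1 : ℝ) ^ 2 * cfPi3Num k

/-- Denominators `B_k` (shifted: `cfPi3Den (k+1) = B_k`, `cfPi3Den 0 = B_{-1} = 0`). -/
noncomputable def cfPi3Den : ℕ → ℝ
  | 0 => 0
  | 1 => 1
  | (k + 2) => 6 * cfPi3Den (k + 1) + (2 * (k + 1) - 1 : ℝ) ^ 2 * cfPi3Den k

/-- Nilakantha partial sums, written via the Leibniz partial sums. -/
noncomputable def sPi3 (k : ℕ) : ℝ :=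
  4 * (∑ i ∈ Finset.range (k + 1), (-1 : ℝ) ^ i / (2 * i + 1)) + (-1 : ℝ) ^ (k + 1) / (k + 1)

lemma doubleFac_rec (k : ℕ) :
    ((2 * k + 5)‼ : ℝ) = (2 * k + 5) * (2 * k + 3) * (2 * k + 1)‼ := by
  have h1 : 2 * k + 5 = (2 * k + 3) + 2 := by ring
  have h2 : 2 * k + 3 = (2 * k + 1) + 2 := by ring
  rw [h1, Nat.doubleFactorial_add_two, h2, Nat.doubleFactorial_add_two]
  push_cast; ring

lemma doubleFac_rec' (k : ℕ) :
    ((2 * k + 3)‼ : ℝ) = (2 * k + 3) * (2 * k + 1)‼ := by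
  have h2 : 2 * k + 3 = (2 * k + 1) + 2 := by ring
  rw [h2, Nat.doubleFactorial_add_two]; push_cast; ring

lemma cfPi3Den_eq (k : ℕ) : cfPi3Den (k + 1) = ((k : ℝ) + 1) * (2 * k + 1)‼ := by
  induction k using Nat.twoStepInduction with
  | zero => simp [cfPi3Den]
  | one => norm_num [cfPi3Den, doubleFac_rec']
  | more k ih1 ih2 =>
    show cfPi3Den ((k + 2) + 1) = _
    rw [show (k + 2) + 1 = (k + 1) + 2 from rfl, cfPi3Den, ih1, ih2]
    rw [show 2 * (k + 2) + 1 = 2 * k + 5 from by ring,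
        show 2 * (k + 1) + 1 = 2 * k + 3 from by ring,
        doubleFac_rec, doubleFac_rec']
    push_cast; ring

lemma cfPi3Num_eq (k : ℕ) :
    cfPi3Num (k + 1) = (((k : ℝ) + 1) * (2 * k + 1)‼) * sPi3 k := by
  induction k using Nat.twoStepInduction with
  | zero => norm_num [cfPi3Num, sPi3]
  | one =>
    simp [cfPi3Num, sPi3, Finset.sum_range_succ, doubleFac_rec']
    norm_num
  | more k ih1 ih2 =>
    show cfPi3Num ((k + 2) + 1) = _
    rw [show (k + 2) + 1 = (k + 1) + 2 from rfl, cfPi3Num, ih1, ih2]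
    rw [show 2 * (k + 2) + 1 = 2 * k + 5 from by ring,
        show 2 * (k + 1) + 1 = 2 * k + 3 from by ring,
        doubleFac_rec, doubleFac_rec']
    simp only [sPi3, Finset.sum_range_succ]
    have hk1 : (k : ℝ) + 1 ≠ 0 := by positivity
    have hk2 : (k : ℝ) + 2 ≠ 0 := by positivity
    have hk3 : (k : ℝ) + 3 ≠ 0 := by positivity
    have h3 : (2 * (k : ℝ) + 3) ≠ 0 := by positivity
    have h5 : (2 * (k : ℝ) + 5) ≠ 0 := by positivity
    have h1' : (2 * ((k : ℝ) + 1) + 1) = 2 * k + 3 := by ring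
    have h2' : (2 * ((k : ℝ) + 2) + 1) = 2 * k + 5 := by ring
    push_cast
    rw [h1', h2']
    field_simp
    ring

/-- `π = 3 + 1²/(6 + 3²/(6 + 5²/(6 + ⋯)))`: the convergents `c_k = A_k / B_k`
converge to `π`. -/
theorem pi_continued_fraction_three_plus :
    Tendsto (fun k : ℕ => cfPi3Num (k + 1) / cfPi3Den (k + 1)) atTop (nhds π) := by
  have hD : ∀ k : ℕ, (((k : ℝ) + 1) * (2 * k + 1)‼) ≠ 0 := fun k =>
    ne_of_gt (mul_pos (by positivity) (Nat.cast_pos.mpr (Nat.doubleFactorial_pos _)))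
  have heq : (fun k : ℕ => cfPi3Num (k + 1) / cfPi3Den (k + 1)) = sPi3 := by
    funext k
    rw [cfPi3Num_eq, cfPi3Den_eq, mul_comm, mul_div_assoc, div_self (hD k), mul_one]
  rw [heq]
  have h1 : Tendsto (fun k : ℕ =>
      4 * ∑ i ∈ Finset.range (k + 1), (-1 : ℝ) ^ i / (2 * i + 1)) atTop (nhds (4 * (π / 4))) :=
    (Real.tendsto_sum_pi_div_four.comp (tendsto_add_atTop_nat 1)).const_mul 4
  have h2 : Tendsto (fun k : ℕ => ((-1 : ℝ) ^ (k + 1) / (k + 1))) atTop (nhds 0) := by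
    apply squeeze_zero_norm (fun n => ?_) tendsto_one_div_add_atTop_nhds_zero_nat
    rw [norm_div, norm_pow, norm_neg, norm_one, one_pow]
    rw [Real.norm_eq_abs, abs_of_nonneg (by positivity : (0:ℝ) ≤ (n:ℝ) + 1)]
  have h := h1.add h2
  rw [add_zero, show 4 * (π / 4) = π by ring] at h
  exact h
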